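/- Fix N ∈ ℕ, an N × p real matrix X with rank p, β ∈ ℝ^p, and a vector ε ∈ ℝ^N; set Y = Xβ + ε. Let probabilities π_1,…,π_N satisfy π_j > 0 and ∑_j π_j = 1, and for each r let I_1,…,I_r be i.i.d. with P(I_i = j) = π_j, w_j^{(r)} = (1/r) ∑_{i=1}^r 1{I_i = j}/π_j, and W_r = diag(w^{(r)}). On the event that X^T W_r X is invertible define β̂_{W_r} = (X^T W_r X)^{-1} X^T W_r Y, H_{W_r} = X (X^T W_r X)^{-1} X^T W_r, and V_r = (X^T W_r X)^{-1} X^T W_r² X (X^T W_r X)^{-1}. Then, almost surely, as r → ∞: (i) β̂_{W_r} → β̂_{OLS} = (X^T X)^{-1} X^T Y; (ii) ‖(I − H_{W_r}) ε‖₂² → ‖(I − H) ε‖₂² where H = X(X^T X)^{-1} X^T; and (iii) (V_r)_{jj} → ((X^T X)^{-1})_{jj} for each j. -/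

import Mathlib

/-!
The weight `w_j^{(r)}` is the empirical mean of the i.i.d. variables `1{I_i = j} / π_j`, whose
expectation is `1`, so by the strong law of large numbers `W_r → I` almost surely. Full column
rank makes `XᵀX` invertible, so matrix inversion is continuous at `Xᵀ I X`; hence all three
quantities are continuous functions of the weight vector at `1`, where they are the ordinary
least squares quantities.
-/

open MeasureTheory ProbabilityTheory Matrix Filter Topology

section Sampling
variable {Ω α : Type*} [MeasurableSpace Ω] {μ : Measure Ω} [MeasurableSpace α]
  [MeasurableSingletonClass α] [Countable α]

theorem identDistrib_of_measure_preimage_singleton {X Y : Ω → α} (hX : Measurable X)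
    (hY : Measurable Y) (h : ∀ a, μ (X ⁻¹' {a}) = μ (Y ⁻¹' {a})) : IdentDistrib X Y μ μ where
  aemeasurable_fst := hX.aemeasurable
  aemeasurable_snd := hY.aemeasurable
  map_eq := Measure.ext_of_singleton fun a => by
    rw [Measure.map_apply hX (measurableSet_singleton a),
      Measure.map_apply hY (measurableSet_singleton a), h]

theorem tendsto_inverse_probability_weight_ae [DecidableEq α] [IsProbabilityMeasure μ]
    {I : ℕ → Ω → α} (hmeas : ∀ i, Measurable (I i))
    (hindep : Pairwise fun i k => IndepFun (I i) (I k) μ)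
    (hident : ∀ i, IdentDistrib (I i) (I 0) μ μ) {j : α} {q : ℝ} (hq : 0 < q)
    (hprob : μ (I 0 ⁻¹' {j}) = ENNReal.ofReal q) :
    ∀ᵐ ω ∂μ, Tendsto
      (fun r : ℕ => (1 / (r : ℝ)) * ∑ i ∈ Finset.range r, if I i ω = j then 1 / q else 0)
      atTop (𝓝 1) := by
  set g : α → ℝ := fun a => if a = j then 1 / q else 0
  have hg : Measurable g := .of_discrete
  have hg0 : g ∘ I 0 = (I 0 ⁻¹' {j}).indicator fun _ => 1 / q := by
    ext ω; by_cases h : I 0 ω = j <;> simp [g, h]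
  have hint : Integrable (g ∘ I 0) μ := by
    rw [hg0]
    exact (integrable_const _).indicator (hmeas 0 (measurableSet_singleton j))
  have hmean : ∫ ω, (g ∘ I 0) ω ∂μ = 1 := by
    rw [hg0, integral_indicator_const _ (hmeas 0 (measurableSet_singleton j)), measureReal_def,
      hprob, ENNReal.toReal_ofReal hq.le, smul_eq_mul, mul_one_div_cancel hq.ne']
  filter_upwards [strong_law_ae_real (fun i => g ∘ I i) hint
    (fun i k hik => (hindep hik).comp hg hg) (fun i => (hident i).comp hg)] with ω hω
  rw [hmean] at hω
  simp only [one_div_mul_eq_div]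
  exact hω

end Sampling

section WeightedLeastSquares
variable {m n : Type*} [Fintype m] [Fintype n] [DecidableEq m] [DecidableEq n]

omit [DecidableEq m] in
theorem Matrix.isUnit_transpose_mul_self_of_rank_eq_card {X : Matrix m n ℝ}
    (hX : X.rank = Fintype.card n) : IsUnit (Xᵀ * X) := by
  have hrange : LinearMap.range (Xᵀ * X).mulVecLin = ⊤ := by
    apply Submodule.eq_top_of_finrank_eq
    rw [Module.finrank_fintype_fun_eq_card, ← hX, ← rank_transpose_mul_self]
    rfl
  exact mulVec_surjective_iff_isUnit.1 (LinearMap.range_eq_top.1 hrange)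

theorem continuousAt_inv_transpose_mul_diagonal_mul {X : Matrix m n ℝ} (hX : IsUnit (Xᵀ * X)) :
    ContinuousAt (fun u : m → ℝ => (Xᵀ * diagonal u * X)⁻¹) 1 := by
  have hgram : ContinuousAt (fun u : m → ℝ => Xᵀ * diagonal u * X) 1 := by fun_prop
  have hinv : ContinuousAt Inv.inv (Xᵀ * X) :=
    continuousAt_matrix_inv _
      (NormedRing.inverse_continuousAt ((isUnit_iff_isUnit_det _).1 hX).unit)
  exact hinv.comp_of_eq hgram (by simp)

variable {ι : Type*} {l : Filter ι} {X : Matrix m n ℝ} {W : ι → m → ℝ}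

theorem tendsto_weightedLeastSquares (hX : IsUnit (Xᵀ * X)) (hW : Tendsto W l (𝓝 1))
    (Y : m → ℝ) :
    Tendsto (fun r => ((Xᵀ * diagonal (W r) * X)⁻¹ * Xᵀ * diagonal (W r)) *ᵥ Y) l
      (𝓝 (((Xᵀ * X)⁻¹ * Xᵀ) *ᵥ Y)) := by
  have hinv := continuousAt_inv_transpose_mul_diagonal_mul hX
  have hF : ContinuousAt
      (fun u : m → ℝ => ((Xᵀ * diagonal u * X)⁻¹ * Xᵀ * diagonal u) *ᵥ Y) 1 := by
    fun_prop
  simpa [Function.comp_def, diagonal_one] using hF.tendsto.comp hW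

theorem tendsto_weightedResidual_sq_sum (hX : IsUnit (Xᵀ * X)) (hW : Tendsto W l (𝓝 1))
    (ε : m → ℝ) :
    Tendsto
      (fun r => ∑ i, ((1 - X * (Xᵀ * diagonal (W r) * X)⁻¹ * Xᵀ * diagonal (W r)) *ᵥ ε) i ^ 2) l
      (𝓝 (∑ i, ((1 - X * (Xᵀ * X)⁻¹ * Xᵀ) *ᵥ ε) i ^ 2)) := by
  have hinv := continuousAt_inv_transpose_mul_diagonal_mul hX
  have hF : ContinuousAt (fun u : m → ℝ =>
      ∑ i, ((1 - X * (Xᵀ * diagonal u * X)⁻¹ * Xᵀ * diagonal u) *ᵥ ε) i ^ 2) 1 := by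
    fun_prop
  simpa [Function.comp_def, diagonal_one] using hF.tendsto.comp hW

theorem tendsto_weightedCovarianceFactor (hX : IsUnit (Xᵀ * X)) (hW : Tendsto W l (𝓝 1)) :
    Tendsto (fun r => (Xᵀ * diagonal (W r) * X)⁻¹ * Xᵀ * (diagonal (W r) * diagonal (W r)) * X
      * (Xᵀ * diagonal (W r) * X)⁻¹) l (𝓝 (Xᵀ * X)⁻¹) := by
  have hinv := continuousAt_inv_transpose_mul_diagonal_mul hX
  have hF : ContinuousAt (fun u : m → ℝ => (Xᵀ * diagonal u * X)⁻¹ * Xᵀ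
      * (diagonal u * diagonal u) * X * (Xᵀ * diagonal u * X)⁻¹) 1 := by
    fun_prop
  have hval : (Xᵀ * X)⁻¹ * Xᵀ * X * (Xᵀ * X)⁻¹ = (Xᵀ * X)⁻¹ := by
    rw [Matrix.mul_assoc _ Xᵀ X, nonsing_inv_mul _ ((isUnit_iff_isUnit_det _).1 hX),
      Matrix.one_mul]
  simpa [Function.comp_def, diagonal_one, hval] using hF.tendsto.comp hW

end WeightedLeastSquares

theorem leveraging_quantities_tendsto_ols_quantities_general
    {Ω : Type*} [MeasurableSpace Ω] (μ : Measure Ω) [IsProbabilityMeasure μ]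
    (N p : ℕ)
    (X : Matrix (Fin N) (Fin p) ℝ) (hrank : X.rank = p)
    (ε : Fin N → ℝ) (Y : Fin N → ℝ)
    (π : Fin N → ℝ) (hπpos : ∀ j, 0 < π j)
    (I : ℕ → Ω → Fin N)
    (hmeas : ∀ i, Measurable (I i))
    (hindep : iIndepFun I μ)
    (hdist : ∀ i j, μ (I i ⁻¹' {j}) = ENNReal.ofReal (π j))
    (w : ℕ → Fin N → Ω → ℝ)
    (hw : ∀ r j ω,
      w r j ω = (1 / (r : ℝ)) * ∑ i ∈ Finset.range r, (if I i ω = j then 1 / π j else 0)) :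
    ∀ᵐ ω ∂μ,
      (∀ j : Fin p,
        Tendsto
          (fun r : ℕ =>
            ((Xᵀ * Matrix.diagonal (fun i => w r i ω) * X)⁻¹ * Xᵀ
              * Matrix.diagonal (fun i => w r i ω)).mulVec Y j)
          atTop (nhds (((Xᵀ * X)⁻¹ * Xᵀ).mulVec Y j))) ∧
      Tendsto
        (fun r : ℕ =>
          ∑ i, (((1 - X * (Xᵀ * Matrix.diagonal (fun i => w r i ω) * X)⁻¹ * Xᵀ
            * Matrix.diagonal (fun i => w r i ω)).mulVec ε) i) ^ 2)
        atTop
        (nhds (∑ i, (((1 - X * (Xᵀ * X)⁻¹ * Xᵀ).mulVec ε) i) ^ 2)) ∧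
      (∀ j : Fin p,
        Tendsto
          (fun r : ℕ =>
            ((Xᵀ * Matrix.diagonal (fun i => w r i ω) * X)⁻¹ * Xᵀ
              * (Matrix.diagonal (fun i => w r i ω) * Matrix.diagonal (fun i => w r i ω))
              * X * (Xᵀ * Matrix.diagonal (fun i => w r i ω) * X)⁻¹) j j)
          atTop (nhds ((Xᵀ * X)⁻¹ j j))) := by
  have hXX : IsUnit (Xᵀ * X) :=
    X.isUnit_transpose_mul_self_of_rank_eq_card (by rwa [Fintype.card_fin])
  have hident : ∀ i, IdentDistrib (I i) (I 0) μ μ := fun i =>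
    identDistrib_of_measure_preimage_singleton (hmeas i) (hmeas 0) fun j => by rw [hdist, hdist]
  have hweights : ∀ᵐ ω ∂μ, ∀ j, Tendsto (fun r => w r j ω) atTop (𝓝 1) := by
    refine ae_all_iff.2 fun j => ?_
    simp only [hw]
    exact tendsto_inverse_probability_weight_ae hmeas (fun i k hik => hindep.indepFun hik) hident
      (hπpos j) (hdist 0 j)
  filter_upwards [hweights] with ω hω
  have hW : Tendsto (fun r j => w r j ω) atTop (𝓝 1) := tendsto_pi_nhds.2 hω
  exact ⟨fun j => tendsto_pi_nhds.1 (tendsto_weightedLeastSquares hXX hW Y) j,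
    tendsto_weightedResidual_sq_sum hXX hW ε,
    fun j => tendsto_pi_nhds.1 (tendsto_pi_nhds.1 (tendsto_weightedCovarianceFactor hXX hW) j) j⟩

/-- With leverage weights `w r j = (1/r) ∑_{i<r} 1{I i = j}/π j` for i.i.d.
sample indices with `P(I i = j) = π j > 0`, `W_r = diag(w r)`, `X` of full column rank
`p`, and deterministic `Y = Xβ + ε`, almost surely as `r → ∞`:
(i) `β̂_{W_r} = (Xᵀ W_r X)⁻¹ Xᵀ W_r Y → β̂_OLS = (Xᵀ X)⁻¹ Xᵀ Y` coordinatewise;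
(ii) `‖(I - H_{W_r}) ε‖₂² → ‖(I - H) ε‖₂²` where `H_W = X (Xᵀ W X)⁻¹ Xᵀ W` and
`H = X (Xᵀ X)⁻¹ Xᵀ`;
(iii) `(V_r)_{jj} → ((Xᵀ X)⁻¹)_{jj}` for each `j`, where
`V_r = (Xᵀ W_r X)⁻¹ Xᵀ W_r² X (Xᵀ W_r X)⁻¹`. -/
theorem leveraging_quantities_tendsto_ols_quantities
    {Ω : Type*} [MeasurableSpace Ω] (μ : Measure Ω) [IsProbabilityMeasure μ]
    (N p : ℕ) (hN : 0 < N) (hNp : p ≤ N)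
    (X : Matrix (Fin N) (Fin p) ℝ) (hrank : X.rank = p)
    (β : Fin p → ℝ) (ε : Fin N → ℝ) (Y : Fin N → ℝ) (hY : Y = X.mulVec β + ε)
    (π : Fin N → ℝ) (hπpos : ∀ j, 0 < π j) (hπsum : ∑ j, π j = 1)
    (I : ℕ → Ω → Fin N)
    (hmeas : ∀ i, Measurable (I i))
    (hindep : iIndepFun I μ)
    (hdist : ∀ i j, μ (I i ⁻¹' {j}) = ENNReal.ofReal (π j))
    (w : ℕ → Fin N → Ω → ℝ)
    (hw : ∀ r j ω,
      w r j ω = (1 / (r : ℝ)) * ∑ i ∈ Finset.range r, (if I i ω = j then 1 / π j else 0)) :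
    ∀ᵐ ω ∂μ,
      (∀ j : Fin p,
        Tendsto
          (fun r : ℕ =>
            ((Xᵀ * Matrix.diagonal (fun i => w r i ω) * X)⁻¹ * Xᵀ
              * Matrix.diagonal (fun i => w r i ω)).mulVec Y j)
          atTop (nhds (((Xᵀ * X)⁻¹ * Xᵀ).mulVec Y j))) ∧
      Tendsto
        (fun r : ℕ =>
          ∑ i, (((1 - X * (Xᵀ * Matrix.diagonal (fun i => w r i ω) * X)⁻¹ * Xᵀ
            * Matrix.diagonal (fun i => w r i ω)).mulVec ε) i) ^ 2)
        atTop
        (nhds (∑ i, (((1 - X * (Xᵀ * X)⁻¹ * Xᵀ).mulVec ε) i) ^ 2)) ∧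
      (∀ j : Fin p,
        Tendsto
          (fun r : ℕ =>
            ((Xᵀ * Matrix.diagonal (fun i => w r i ω) * X)⁻¹ * Xᵀ
              * (Matrix.diagonal (fun i => w r i ω) * Matrix.diagonal (fun i => w r i ω))
              * X * (Xᵀ * Matrix.diagonal (fun i => w r i ω) * X)⁻¹) j j)
          atTop (nhds ((Xᵀ * X)⁻¹ j j))) :=
  leveraging_quantities_tendsto_ols_quantities_general μ N p X hrank ε Y π hπpos I hmeas hindep
    hdist w hw
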